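/- arXiv:1910.08251 — 4 statements merged into one kernel-verified Lean document; each statement's English description precedes it below -/
import Mathlib

section
/- Lemma 1 (propagation of dual-feasible solutions): let ((λ_t, ρ_t)_{t=0}^T, (μ_t, ν̲_t, ν̄_t, σ_t)_{t=0}^{T−1}) be dual feasible. Define shifted multipliers by (λ'_t, ρ'_t) := (λ_{t+1}, ρ_{t+1}) for t = 0,…,T−1, (λ'_T, ρ'_T) := (0, 0), (μ'_t, ν̲'_t, ν̄'_t, σ'_t) := (μ_{t+1}, ν̲_{t+1}, ν̄_{t+1}, σ_{t+1}) for t = 0,…,T−2, and (μ'_{T−1}, ν̲'_{T−1}, ν̄'_{T−1}, σ'_{T−1}) := (0, 0, 0, 0). Then the shifted multipliers are dual feasible. -/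
open Matrix

/-- The squared Euclidean norm `|v|²` of a vector in `ℝ^k`. -/
noncomputable def sqNorm {k : ℕ} (v : Fin k → ℝ) : ℝ := ∑ i, v i ^ 2

variable {n p q r c m : ℕ}

/-- Primal feasibility of a trajectory `((x_t)_{t=0}^T, (u_t)_{t=0}^{T-1})` for the data
`(x̄, (v̲_t), (v̄_t))` of the QP relaxation of the hybrid MPC problem. -/
def PrimalFeasible (T : ℕ)
    (A : Matrix (Fin n) (Fin n) ℝ) (B : Matrix (Fin n) (Fin p) ℝ)
    (F : Matrix (Fin c) (Fin n) ℝ) (G : Matrix (Fin c) (Fin p) ℝ)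
    (V : Matrix (Fin m) (Fin p) ℝ) (h : Fin c → ℝ)
    (xbar : Fin n → ℝ) (vlo vhi : ℕ → Fin m → ℝ)
    (x : ℕ → Fin n → ℝ) (u : ℕ → Fin p → ℝ) : Prop :=
  x 0 = xbar ∧
  (∀ t < T, x (t + 1) = A *ᵥ x t + B *ᵥ u t) ∧
  (∀ t < T, ∀ i, (F *ᵥ x t + G *ᵥ u t) i ≤ h i) ∧
  (∀ t < T, ∀ i, vlo t i ≤ (V *ᵥ u t) i ∧ (V *ᵥ u t) i ≤ vhi t i)

/-- Cost `Σ_{t=0}^T |Q x_t|² + Σ_{t=0}^{T-1} |R u_t|²` of a trajectory. -/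
noncomputable def trajCost (T : ℕ) (Q : Matrix (Fin q) (Fin n) ℝ) (R : Matrix (Fin r) (Fin p) ℝ)
    (x : ℕ → Fin n → ℝ) (u : ℕ → Fin p → ℝ) : ℝ :=
  ∑ t ∈ Finset.range (T + 1), sqNorm (Q *ᵥ x t) + ∑ t ∈ Finset.range T, sqNorm (R *ᵥ u t)

/-- Dual feasibility of a tuple of multipliers
`((λ_t, ρ_t)_{t=0}^T, (μ_t, ν̲_t, ν̄_t, σ_t)_{t=0}^{T-1})`.
Note that dual feasibility does not depend on the bound sequences `(v̲_t), (v̄_t)`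
nor on the initial state `x̄`. -/
def DualFeasible (T : ℕ)
    (A : Matrix (Fin n) (Fin n) ℝ) (B : Matrix (Fin n) (Fin p) ℝ)
    (Q : Matrix (Fin q) (Fin n) ℝ) (R : Matrix (Fin r) (Fin p) ℝ)
    (F : Matrix (Fin c) (Fin n) ℝ) (G : Matrix (Fin c) (Fin p) ℝ)
    (V : Matrix (Fin m) (Fin p) ℝ)
    (lam : ℕ → Fin n → ℝ) (rho : ℕ → Fin q → ℝ)
    (mu : ℕ → Fin c → ℝ) (nlo nhi : ℕ → Fin m → ℝ) (sig : ℕ → Fin r → ℝ) : Prop :=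
  (∀ t < T, Qᵀ *ᵥ rho t + lam t - Aᵀ *ᵥ lam (t + 1) + Fᵀ *ᵥ mu t = 0) ∧
  Qᵀ *ᵥ rho T + lam T = 0 ∧
  (∀ t < T, Rᵀ *ᵥ sig t - Bᵀ *ᵥ lam (t + 1) + Gᵀ *ᵥ mu t + Vᵀ *ᵥ (nhi t - nlo t) = 0) ∧
  (∀ t < T, ∀ i, 0 ≤ mu t i) ∧ (∀ t < T, ∀ i, 0 ≤ nlo t i) ∧ (∀ t < T, ∀ i, 0 ≤ nhi t i)

/-- The dual objective
`d := −Σ_{t=0}^T |ρ_t/2|² − Σ_{t=0}^{T−1}(|σ_t/2|² + hᵀμ_t + v̄_tᵀν̄_t − v̲_tᵀν̲_t) − x̄ᵀλ_0`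
for the data `(x̄, (v̲_t), (v̄_t))`. -/
noncomputable def dualObj (T : ℕ) (h : Fin c → ℝ) (xbar : Fin n → ℝ) (vlo vhi : ℕ → Fin m → ℝ)
    (lam : ℕ → Fin n → ℝ) (rho : ℕ → Fin q → ℝ)
    (mu : ℕ → Fin c → ℝ) (nlo nhi : ℕ → Fin m → ℝ) (sig : ℕ → Fin r → ℝ) : ℝ :=
  -(∑ t ∈ Finset.range (T + 1), sqNorm (fun i => rho t i / 2))
    - ∑ t ∈ Finset.range T,
        (sqNorm (fun i => sig t i / 2) + h ⬝ᵥ mu t + vhi t ⬝ᵥ nhi t - vlo t ⬝ᵥ nlo t)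
    - xbar ⬝ᵥ lam 0

/-- Shift of a `{0,…,T}`-indexed family of multipliers (the `λ_t` or `ρ_t`):
`w'_t := w_{t+1}` for `t = 0,…,T−1` and `w'_T := 0`. -/
noncomputable def shiftT (T : ℕ) {k : ℕ} (w : ℕ → Fin k → ℝ) : ℕ → Fin k → ℝ :=
  fun t => if t < T then w (t + 1) else 0

/-- Shift of a `{0,…,T−1}`-indexed family (the `μ_t, ν̲_t, ν̄_t, σ_t` or the lower
bounds `v̲_t`): `w'_t := w_{t+1}` for `t = 0,…,T−2` and `w'_{T−1} := 0`. -/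
noncomputable def shiftS (T : ℕ) {k : ℕ} (w : ℕ → Fin k → ℝ) : ℕ → Fin k → ℝ :=
  fun t => if t + 1 < T then w (t + 1) else 0

/-- Shift of the upper bounds `v̄_t`: `v̄'_t := v̄_{t+1}` for `t = 0,…,T−2` and
`v̄'_{T−1} := 1` (the all-ones vector). -/
noncomputable def shiftHi (T : ℕ) {k : ℕ} (w : ℕ → Fin k → ℝ) : ℕ → Fin k → ℝ :=
  fun t => if t + 1 < T then w (t + 1) else fun _ => 1

/-! The shift discards the equations at time `0` and re-indexes the others, so every
constraint of the shifted tuple at time `t` is a constraint of the original one at time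
`t + 1`. The only new constraints are those at the last time step `T - 1`, where the
padding makes the shifted costate `λ'_T` and the shifted `μ'_{T-1}, ν'_{T-1}, σ'_{T-1}`
vanish: the input equation then reads `0 = 0`, and the state equation reduces to the
original terminal condition `Qᵀρ_T + λ_T = 0`. -/

section Shift

variable {T k : ℕ} {w : ℕ → Fin k → ℝ} {t : ℕ}

theorem shiftT_of_lt (ht : t < T) : shiftT T w t = w (t + 1) := if_pos ht

@[simp]
theorem shiftT_self : shiftT T w T = 0 := if_neg (lt_irrefl T)

theorem shiftS_of_lt (ht : t + 1 < T) : shiftS T w t = w (t + 1) := if_pos ht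

theorem shiftS_of_le (ht : T ≤ t + 1) : shiftS T w t = 0 := if_neg (not_lt.2 ht)

theorem shiftS_nonneg (hw : ∀ t < T, ∀ i, 0 ≤ w t i) (t : ℕ) (i : Fin k) :
    0 ≤ shiftS T w t i := by
  unfold shiftS
  split_ifs with ht
  · exact hw (t + 1) ht i
  · exact le_rfl

end Shift

section ShiftedStationarity

variable {T : ℕ} {A : Matrix (Fin n) (Fin n) ℝ} {B : Matrix (Fin n) (Fin p) ℝ}
  {Q : Matrix (Fin q) (Fin n) ℝ} {R : Matrix (Fin r) (Fin p) ℝ}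
  {F : Matrix (Fin c) (Fin n) ℝ} {G : Matrix (Fin c) (Fin p) ℝ} {V : Matrix (Fin m) (Fin p) ℝ}
  {lam : ℕ → Fin n → ℝ} {rho : ℕ → Fin q → ℝ}
  {mu : ℕ → Fin c → ℝ} {nlo nhi : ℕ → Fin m → ℝ} {sig : ℕ → Fin r → ℝ}

theorem shifted_state_stationarity
    (hstate : ∀ t < T, Qᵀ *ᵥ rho t + lam t - Aᵀ *ᵥ lam (t + 1) + Fᵀ *ᵥ mu t = 0)
    (hterm : Qᵀ *ᵥ rho T + lam T = 0) :
    ∀ t < T, Qᵀ *ᵥ shiftT T rho t + shiftT T lam t - Aᵀ *ᵥ shiftT T lam (t + 1)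
      + Fᵀ *ᵥ shiftS T mu t = 0 := by
  intro t ht
  rw [shiftT_of_lt ht, shiftT_of_lt ht]
  rcases (Nat.succ_le_of_lt ht).lt_or_eq with hnext | rfl
  · rw [shiftT_of_lt hnext, shiftS_of_lt hnext]
    exact hstate (t + 1) hnext
  · rw [shiftT_self, shiftS_of_le le_rfl]
    simpa using hterm

theorem shifted_input_stationarity
    (hinput : ∀ t < T,
      Rᵀ *ᵥ sig t - Bᵀ *ᵥ lam (t + 1) + Gᵀ *ᵥ mu t + Vᵀ *ᵥ (nhi t - nlo t) = 0) :
    ∀ t < T, Rᵀ *ᵥ shiftS T sig t - Bᵀ *ᵥ shiftT T lam (t + 1) + Gᵀ *ᵥ shiftS T mu t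
      + Vᵀ *ᵥ (shiftS T nhi t - shiftS T nlo t) = 0 := by
  intro t ht
  rcases (Nat.succ_le_of_lt ht).lt_or_eq with hnext | rfl
  · simp only [shiftT_of_lt hnext, shiftS_of_lt hnext]
    exact hinput (t + 1) hnext
  · simp [shiftS_of_le]

end ShiftedStationarity

theorem shifted_multipliers_dual_feasible_general (n p q r c m T : ℕ)
    (A : Matrix (Fin n) (Fin n) ℝ) (B : Matrix (Fin n) (Fin p) ℝ)
    (Q : Matrix (Fin q) (Fin n) ℝ) (R : Matrix (Fin r) (Fin p) ℝ)
    (F : Matrix (Fin c) (Fin n) ℝ) (G : Matrix (Fin c) (Fin p) ℝ)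
    (V : Matrix (Fin m) (Fin p) ℝ)
    (lam : ℕ → Fin n → ℝ) (rho : ℕ → Fin q → ℝ)
    (mu : ℕ → Fin c → ℝ) (nlo nhi : ℕ → Fin m → ℝ) (sig : ℕ → Fin r → ℝ)
    (hdual : DualFeasible T A B Q R F G V lam rho mu nlo nhi sig) :
    DualFeasible T A B Q R F G V
      (shiftT T lam) (shiftT T rho) (shiftS T mu) (shiftS T nlo) (shiftS T nhi)
      (shiftS T sig) := by
  obtain ⟨hstate, hterm, hinput, hmu, hnlo, hnhi⟩ := hdual
  exact ⟨shifted_state_stationarity hstate hterm, by simp,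
    shifted_input_stationarity hinput, fun t _ => shiftS_nonneg hmu t,
    fun t _ => shiftS_nonneg hnlo t, fun t _ => shiftS_nonneg hnhi t⟩

/-- **Lemma 1 (propagation of dual-feasible solutions):** shifting a dual-feasible
tuple of multipliers one step backwards in time (padding with zeros at the end)
yields a dual-feasible tuple. -/
theorem shifted_multipliers_dual_feasible (n p q r c m T : ℕ) (hT : 1 ≤ T)
    (A : Matrix (Fin n) (Fin n) ℝ) (B : Matrix (Fin n) (Fin p) ℝ)
    (Q : Matrix (Fin q) (Fin n) ℝ) (R : Matrix (Fin r) (Fin p) ℝ)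
    (F : Matrix (Fin c) (Fin n) ℝ) (G : Matrix (Fin c) (Fin p) ℝ)
    (V : Matrix (Fin m) (Fin p) ℝ) (h : Fin c → ℝ)
    (lam : ℕ → Fin n → ℝ) (rho : ℕ → Fin q → ℝ)
    (mu : ℕ → Fin c → ℝ) (nlo nhi : ℕ → Fin m → ℝ) (sig : ℕ → Fin r → ℝ)
    (hdual : DualFeasible T A B Q R F G V lam rho mu nlo nhi sig) :
    DualFeasible T A B Q R F G V
      (shiftT T lam) (shiftT T rho) (shiftS T mu) (shiftS T nlo) (shiftS T nhi)
      (shiftS T sig) :=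
  shifted_multipliers_dual_feasible_general n p q r c m T A B Q R F G V lam rho mu nlo nhi sig hdual
end

section
/- Shifted dual-objective identity (core computation of Theorem 1, Appendix C): let ((λ_t, ρ_t)_{t=0}^T, (μ_t, ν̲_t, ν̄_t, σ_t)_{t=0}^{T−1}) be dual feasible with dual objective d₀ for data (x₀, (v̲_t), (v̄_t)). Let u₀ ∈ ℝ^p and e₀ ∈ ℝ^n be arbitrary, set x₁ := A x₀ + B u₀ + e₀, and define π₁ := −|Q x₀|² − |R u₀|², π₂ := |ρ₀/2 − Q x₀|² + |σ₀/2 − R u₀|², π₃ := (h − F x₀ − G u₀)ᵀμ₀ + (V u₀ − v̲₀)ᵀν̲₀ + (v̄₀ − V u₀)ᵀν̄₀, and π₄ := −e₀ᵀλ₁. Then the dual objective of the shifted multipliers for the data (x₁, (v̲'_t), (v̄'_t)) equals d₀ + π₁ + π₂ + π₃ + π₄, where (v̲'_t), (v̄'_t) are the shifted bounds. -/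
open Matrix

variable {n p q r c m : ℕ}

/-! The shifted multipliers drop exactly the `t = 0` terms of the dual objective (the padding
at the end contributes nothing), so the difference of the two objectives only involves
`ρ₀, σ₀, μ₀, ν̲₀, ν̄₀, λ₀, λ₁`. Pairing the `t = 0` stationarity conditions with `x₀` and `u₀`
eliminates `λ₀` and expresses `(A x₀ + B u₀)ᵀλ₁` through the other multipliers; completing the
squares `|ρ₀/2 − Q x₀|²`, `|σ₀/2 − R u₀|²` gives the identity. -/

open Finset

theorem Finset.sum_range_succ_eq_sub_head {f g : ℕ → ℝ} {N : ℕ}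
    (hg : ∀ t < N, g t = f (t + 1)) (hN : g N = 0) :
    ∑ t ∈ range (N + 1), g t = ∑ t ∈ range (N + 1), f t - f 0 := by
  rw [sum_range_succ, sum_range_succ', hN, sum_congr rfl fun t ht => hg t (mem_range.mp ht)]
  ring

theorem sqNorm_half_sub {k : ℕ} (a b : Fin k → ℝ) :
    sqNorm (fun i => a i / 2 - b i) = sqNorm (fun i => a i / 2) - b ⬝ᵥ a + sqNorm b := by
  simp only [sqNorm, dotProduct, ← sum_sub_distrib, ← sum_add_distrib]
  exact sum_congr rfl fun i _ => by ring

section Shift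

variable {n q r c m : ℕ}

theorem dualObj_shift (T : ℕ) (h : Fin c → ℝ) (x x' : Fin n → ℝ) (vlo vhi : ℕ → Fin m → ℝ)
    (lam : ℕ → Fin n → ℝ) (rho : ℕ → Fin q → ℝ)
    (mu : ℕ → Fin c → ℝ) (nlo nhi : ℕ → Fin m → ℝ) (sig : ℕ → Fin r → ℝ) :
    dualObj (T + 1) h x' (shiftS (T + 1) vlo) (shiftHi (T + 1) vhi)
        (shiftT (T + 1) lam) (shiftT (T + 1) rho) (shiftS (T + 1) mu) (shiftS (T + 1) nlo)
        (shiftS (T + 1) nhi) (shiftS (T + 1) sig)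
      = dualObj (T + 1) h x vlo vhi lam rho mu nlo nhi sig
        + sqNorm (fun i => rho 0 i / 2)
        + (sqNorm (fun i => sig 0 i / 2) + h ⬝ᵥ mu 0 + vhi 0 ⬝ᵥ nhi 0 - vlo 0 ⬝ᵥ nlo 0)
        + x ⬝ᵥ lam 0 - x' ⬝ᵥ lam 1 := by
  have hrho := sum_range_succ_eq_sub_head (N := T + 1)
    (f := fun t => sqNorm (fun i => rho t i / 2))
    (g := fun t => sqNorm (fun i => shiftT (T + 1) rho t i / 2))
    (fun t ht => by simp only [shiftT, if_pos ht]) (by simp [shiftT, sqNorm])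
  have hsig := sum_range_succ_eq_sub_head (N := T)
    (f := fun t => sqNorm (fun i => sig t i / 2) + h ⬝ᵥ mu t + vhi t ⬝ᵥ nhi t - vlo t ⬝ᵥ nlo t)
    (g := fun t => sqNorm (fun i => shiftS (T + 1) sig t i / 2) + h ⬝ᵥ shiftS (T + 1) mu t
      + shiftHi (T + 1) vhi t ⬝ᵥ shiftS (T + 1) nhi t
      - shiftS (T + 1) vlo t ⬝ᵥ shiftS (T + 1) nlo t)
    (fun t ht => by simp only [shiftS, shiftHi, if_pos (Nat.succ_lt_succ ht)])
    (by simp [shiftS, shiftHi, sqNorm])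
  have hlam : shiftT (T + 1) lam 0 = lam 1 := if_pos T.succ_pos
  simp only [dualObj, hrho, hsig, hlam]
  ring

end Shift

namespace DualFeasible

variable {n p q r c m T : ℕ} {A : Matrix (Fin n) (Fin n) ℝ} {B : Matrix (Fin n) (Fin p) ℝ}
  {Q : Matrix (Fin q) (Fin n) ℝ} {R : Matrix (Fin r) (Fin p) ℝ}
  {F : Matrix (Fin c) (Fin n) ℝ} {G : Matrix (Fin c) (Fin p) ℝ} {V : Matrix (Fin m) (Fin p) ℝ}
  {lam : ℕ → Fin n → ℝ} {rho : ℕ → Fin q → ℝ}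
  {mu : ℕ → Fin c → ℝ} {nlo nhi : ℕ → Fin m → ℝ} {sig : ℕ → Fin r → ℝ}

theorem state_pairing (hdual : DualFeasible T A B Q R F G V lam rho mu nlo nhi sig)
    {t : ℕ} (ht : t < T) (x : Fin n → ℝ) :
    (Q *ᵥ x) ⬝ᵥ rho t + x ⬝ᵥ lam t - (A *ᵥ x) ⬝ᵥ lam (t + 1) + (F *ᵥ x) ⬝ᵥ mu t = 0 := by
  have := congrArg (x ⬝ᵥ ·) (hdual.1 t ht)
  simpa only [dotProduct_add, dotProduct_sub, dotProduct_zero, dotProduct_transpose_mulVec,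
    dotProduct_comm _ (_ *ᵥ x)] using this

theorem input_pairing (hdual : DualFeasible T A B Q R F G V lam rho mu nlo nhi sig)
    {t : ℕ} (ht : t < T) (u : Fin p → ℝ) :
    (R *ᵥ u) ⬝ᵥ sig t - (B *ᵥ u) ⬝ᵥ lam (t + 1) + (G *ᵥ u) ⬝ᵥ mu t
      + (V *ᵥ u) ⬝ᵥ (nhi t - nlo t) = 0 := by
  have := congrArg (u ⬝ᵥ ·) (hdual.2.2.1 t ht)
  simpa only [dotProduct_add, dotProduct_sub, dotProduct_zero, dotProduct_transpose_mulVec,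
    dotProduct_comm _ (_ *ᵥ u)] using this

end DualFeasible

/-- **Shifted dual-objective identity** (core computation of Theorem 1): the dual
objective of the shifted multipliers for the shifted data `(x₁, (v̲'_t), (v̄'_t))`,
where `x₁ = A x₀ + B u₀ + e₀`, equals `d₀ + π₁ + π₂ + π₃ + π₄`. -/
theorem shifted_dual_objective_identity (n p q r c m T : ℕ) (hT : 1 ≤ T)
    (A : Matrix (Fin n) (Fin n) ℝ) (B : Matrix (Fin n) (Fin p) ℝ)
    (Q : Matrix (Fin q) (Fin n) ℝ) (R : Matrix (Fin r) (Fin p) ℝ)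
    (F : Matrix (Fin c) (Fin n) ℝ) (G : Matrix (Fin c) (Fin p) ℝ)
    (V : Matrix (Fin m) (Fin p) ℝ) (h : Fin c → ℝ)
    (x0 : Fin n → ℝ) (u0 : Fin p → ℝ) (e0 : Fin n → ℝ)
    (vlo vhi : ℕ → Fin m → ℝ)
    (lam : ℕ → Fin n → ℝ) (rho : ℕ → Fin q → ℝ)
    (mu : ℕ → Fin c → ℝ) (nlo nhi : ℕ → Fin m → ℝ) (sig : ℕ → Fin r → ℝ)
    (hdual : DualFeasible T A B Q R F G V lam rho mu nlo nhi sig) :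
    dualObj T h (A *ᵥ x0 + B *ᵥ u0 + e0) (shiftS T vlo) (shiftHi T vhi)
        (shiftT T lam) (shiftT T rho) (shiftS T mu) (shiftS T nlo) (shiftS T nhi)
        (shiftS T sig)
      = dualObj T h x0 vlo vhi lam rho mu nlo nhi sig
        + (-(sqNorm (Q *ᵥ x0) + sqNorm (R *ᵥ u0)))
        + (sqNorm (fun i => rho 0 i / 2 - (Q *ᵥ x0) i) +
          sqNorm (fun i => sig 0 i / 2 - (R *ᵥ u0) i))
        + ((h - F *ᵥ x0 - G *ᵥ u0) ⬝ᵥ mu 0 + (V *ᵥ u0 - vlo 0) ⬝ᵥ nlo 0 +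
          (vhi 0 - V *ᵥ u0) ⬝ᵥ nhi 0)
        + (-(e0 ⬝ᵥ lam 1)) := by
  obtain ⟨T, rfl⟩ : ∃ T', T = T' + 1 := ⟨T - 1, by omega⟩
  have hx := hdual.state_pairing T.succ_pos x0
  have hu := hdual.input_pairing T.succ_pos u0
  rw [dualObj_shift T h x0]
  simp only [sqNorm_half_sub, add_dotProduct, sub_dotProduct, dotProduct_sub] at hu ⊢
  linarith
end

section
/- Corollary 1 (propagation of certificates of infeasibility): let ((λ_t, ρ_t)_{t=0}^T, (μ_t, ν̲_t, ν̄_t, σ_t)_{t=0}^{T−1}) be dual feasible with ρ_t = 0 for all t and σ_t = 0 for all t, and with strictly positive dual objective d₀ for data (x₀, (v̲_t), (v̄_t)). Let u₀ ∈ ℝ^p, e₀ ∈ ℝ^n, x₁ := A x₀ + B u₀ + e₀, and π₃ := (h − F x₀ − G u₀)ᵀμ₀ + (V u₀ − v̲₀)ᵀν̲₀ + (v̄₀ − V u₀)ᵀν̄₀. (a) If e₀ᵀλ₁ < d₀ + π₃, then no trajectory is primal feasible for the shifted data (x₁, (v̲'_t), (v̄'_t)). (b) If moreover F x₀ + G u₀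 ≤ h and v̲₀ ≤ V u₀ ≤ v̄₀ componentwise, then e₀ = 0 satisfies the strict inequality e₀ᵀλ₁ < d₀ + π₃. -/
open Matrix

variable {n p q r c m : ℕ}

lemma dotT {k l : ℕ} (M : Matrix (Fin k) (Fin l) ℝ) (v : Fin l → ℝ) (w : Fin k → ℝ) :
    v ⬝ᵥ (Mᵀ *ᵥ w) = (M *ᵥ v) ⬝ᵥ w := by
  rw [Matrix.dotProduct_mulVec, Matrix.vecMul_transpose]

lemma dot_nonneg' {k : ℕ} {v w : Fin k → ℝ} (hv : ∀ i, 0 ≤ v i) (hw : ∀ i, 0 ≤ w i) :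
    0 ≤ v ⬝ᵥ w :=
  Finset.sum_nonneg fun i _ => mul_nonneg (hv i) (hw i)

/-- **Corollary 1 (propagation of certificates of infeasibility):** given a certificate
of infeasibility (`ρ = 0`, `σ = 0`, positive dual objective `d₀`) for the data
`(x₀, (v̲_t), (v̄_t))`:
(a) if `e₀ᵀλ₁ < d₀ + π₃` then no trajectory is primal feasible for the shifted data
`(x₁, (v̲'_t), (v̄'_t))` with `x₁ = A x₀ + B u₀ + e₀`; and
(b) if moreover `F x₀ + G u₀ ≤ h` and `v̲₀ ≤ V u₀ ≤ v̄₀` componentwise,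
then `e₀ = 0` satisfies the strict inequality. -/
theorem certificate_propagation (n p q r c m T : ℕ) (hT : 1 ≤ T)
    (A : Matrix (Fin n) (Fin n) ℝ) (B : Matrix (Fin n) (Fin p) ℝ)
    (Q : Matrix (Fin q) (Fin n) ℝ) (R : Matrix (Fin r) (Fin p) ℝ)
    (F : Matrix (Fin c) (Fin n) ℝ) (G : Matrix (Fin c) (Fin p) ℝ)
    (V : Matrix (Fin m) (Fin p) ℝ) (h : Fin c → ℝ)
    (x0 : Fin n → ℝ) (u0 : Fin p → ℝ)
    (vlo vhi : ℕ → Fin m → ℝ)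
    (lam : ℕ → Fin n → ℝ) (rho : ℕ → Fin q → ℝ)
    (mu : ℕ → Fin c → ℝ) (nlo nhi : ℕ → Fin m → ℝ) (sig : ℕ → Fin r → ℝ)
    (hdual : DualFeasible T A B Q R F G V lam rho mu nlo nhi sig)
    (hrho : ∀ t ≤ T, rho t = 0) (hsig : ∀ t < T, sig t = 0)
    (hpos : 0 < dualObj T h x0 vlo vhi lam rho mu nlo nhi sig) :
    (∀ e0 : Fin n → ℝ,
        e0 ⬝ᵥ lam 1 <
          dualObj T h x0 vlo vhi lam rho mu nlo nhi sig
            + ((h - F *ᵥ x0 - G *ᵥ u0) ⬝ᵥ mu 0 + (V *ᵥ u0 - vlo 0) ⬝ᵥ nlo 0 +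
          (vhi 0 - V *ᵥ u0) ⬝ᵥ nhi 0) →
        ¬ ∃ (x : ℕ → Fin n → ℝ) (u : ℕ → Fin p → ℝ),
            PrimalFeasible T A B F G V h (A *ᵥ x0 + B *ᵥ u0 + e0)
              (shiftS T vlo) (shiftHi T vhi) x u)
    ∧ ((∀ i, (F *ᵥ x0 + G *ᵥ u0) i ≤ h i) →
       (∀ i, vlo 0 i ≤ (V *ᵥ u0) i ∧ (V *ᵥ u0) i ≤ vhi 0 i) →
       (0 : Fin n → ℝ) ⬝ᵥ lam 1 <
         dualObj T h x0 vlo vhi lam rho mu nlo nhi sig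
           + ((h - F *ᵥ x0 - G *ᵥ u0) ⬝ᵥ mu 0 + (V *ᵥ u0 - vlo 0) ⬝ᵥ nlo 0 +
          (vhi 0 - V *ᵥ u0) ⬝ᵥ nhi 0)) := by
  obtain ⟨hstat, hstatT, hinp, hmu, hnlo, hnhi⟩ := hdual
  have hT0 : 0 < T := hT
  have hlamT : lam T = 0 := by
    have h1 := hstatT
    rw [hrho T le_rfl] at h1
    simpa [Matrix.mulVec_zero] using h1
  have hstat' : ∀ t < T, lam t = Aᵀ *ᵥ lam (t + 1) - Fᵀ *ᵥ mu t := by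
    intro t ht
    have h1 := hstat t ht
    rw [hrho t ht.le] at h1
    simp only [Matrix.mulVec_zero, zero_add] at h1
    linear_combination h1
  have hinp' : ∀ t < T, Bᵀ *ᵥ lam (t + 1) = Gᵀ *ᵥ mu t + Vᵀ *ᵥ nhi t - Vᵀ *ᵥ nlo t := by
    intro t ht
    have h1 := hinp t ht
    rw [hsig t ht] at h1
    simp only [Matrix.mulVec_zero, zero_sub, Matrix.mulVec_sub] at h1
    linear_combination -h1
  have hd0 : dualObj T h x0 vlo vhi lam rho mu nlo nhi sig
      = -(∑ t ∈ Finset.range T, (h ⬝ᵥ mu t + vhi t ⬝ᵥ nhi t - vlo t ⬝ᵥ nlo t))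
        - x0 ⬝ᵥ lam 0 := by
    simp only [dualObj, sqNorm]
    have h1 : ∑ t ∈ Finset.range (T + 1), ∑ i, (rho t i / 2) ^ 2 = 0 :=
      Finset.sum_eq_zero fun t ht => Finset.sum_eq_zero fun i _ => by
        rw [hrho t (Nat.lt_succ_iff.mp (Finset.mem_range.mp ht))]; simp
    have h2 : ∀ t ∈ Finset.range T,
        ((∑ i, (sig t i / 2) ^ 2) + h ⬝ᵥ mu t + vhi t ⬝ᵥ nhi t - vlo t ⬝ᵥ nlo t)
          = h ⬝ᵥ mu t + vhi t ⬝ᵥ nhi t - vlo t ⬝ᵥ nlo t := by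
      intro t ht
      rw [hsig t (Finset.mem_range.mp ht)]; simp
    rw [h1, Finset.sum_congr rfl h2]
    ring
  have e10 : x0 ⬝ᵥ lam 0 = (A *ᵥ x0) ⬝ᵥ lam 1 - (F *ᵥ x0) ⬝ᵥ mu 0 := by
    have h1 := hstat' 0 hT0
    norm_num at h1
    rw [h1, dotProduct_sub, dotT, dotT]
  have e20 : (B *ᵥ u0) ⬝ᵥ lam 1
      = (G *ᵥ u0) ⬝ᵥ mu 0 + (V *ᵥ u0) ⬝ᵥ nhi 0 - (V *ᵥ u0) ⬝ᵥ nlo 0 := by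
    have h1 := hinp' 0 hT0
    norm_num at h1
    rw [← dotT B u0 (lam 1), h1, dotProduct_sub, dotProduct_add,
      dotT, dotT, dotT]
  constructor
  · rintro e0 he ⟨x, u, hx0, hstep, hFle, hVb⟩
    have key : ∀ t < T,
        (h - F *ᵥ x t - G *ᵥ u t) ⬝ᵥ shiftS T mu t
          + (V *ᵥ u t - shiftS T vlo t) ⬝ᵥ shiftS T nlo t
          + (shiftHi T vhi t - V *ᵥ u t) ⬝ᵥ shiftS T nhi t
        = (h ⬝ᵥ shiftS T mu t + shiftHi T vhi t ⬝ᵥ shiftS T nhi t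
            - shiftS T vlo t ⬝ᵥ shiftS T nlo t)
          + (x t ⬝ᵥ shiftT T lam t - x (t + 1) ⬝ᵥ shiftT T lam (t + 1)) := by
      intro t ht
      by_cases h1 : t + 1 < T
      · simp only [shiftS, shiftT, shiftHi, if_pos h1, if_pos ht]
        rw [hstep t ht]
        have e1 : x t ⬝ᵥ lam (t + 1)
            = (A *ᵥ x t) ⬝ᵥ lam (t + 2) - (F *ᵥ x t) ⬝ᵥ mu (t + 1) := by
          rw [hstat' (t + 1) h1, dotProduct_sub, dotT, dotT]
        have e2 : (B *ᵥ u t) ⬝ᵥ lam (t + 2)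
            = (G *ᵥ u t) ⬝ᵥ mu (t + 1) + (V *ᵥ u t) ⬝ᵥ nhi (t + 1)
              - (V *ᵥ u t) ⬝ᵥ nlo (t + 1) := by
          rw [← dotT B (u t) (lam (t + 2)), hinp' (t + 1) h1, dotProduct_sub,
            dotProduct_add, dotT, dotT, dotT]
        simp only [sub_dotProduct, add_dotProduct, dotProduct_sub,
          dotProduct_add] at e1 e2 ⊢
        linarith [e1, e2]
      · have h2 : t + 1 = T := by omega
        simp only [shiftS, shiftT, shiftHi, if_neg h1, if_pos ht]
        rw [h2, hlamT]
        simp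
    have hsum : ∑ t ∈ Finset.range T,
        ((h - F *ᵥ x t - G *ᵥ u t) ⬝ᵥ shiftS T mu t
          + (V *ᵥ u t - shiftS T vlo t) ⬝ᵥ shiftS T nlo t
          + (shiftHi T vhi t - V *ᵥ u t) ⬝ᵥ shiftS T nhi t)
        = ∑ t ∈ Finset.range T,
          ((h ⬝ᵥ shiftS T mu t + shiftHi T vhi t ⬝ᵥ shiftS T nhi t
            - shiftS T vlo t ⬝ᵥ shiftS T nlo t)
          + (x t ⬝ᵥ shiftT T lam t - x (t + 1) ⬝ᵥ shiftT T lam (t + 1))) :=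
      Finset.sum_congr rfl fun t ht => key t (Finset.mem_range.mp ht)
    have hS : 0 ≤ ∑ t ∈ Finset.range T,
        ((h - F *ᵥ x t - G *ᵥ u t) ⬝ᵥ shiftS T mu t
          + (V *ᵥ u t - shiftS T vlo t) ⬝ᵥ shiftS T nlo t
          + (shiftHi T vhi t - V *ᵥ u t) ⬝ᵥ shiftS T nhi t) := by
      apply Finset.sum_nonneg
      intro t ht
      have ht' := Finset.mem_range.mp ht
      have m1 : ∀ i, 0 ≤ shiftS T mu t i := by
        intro i; by_cases h1 : t + 1 < T
        · simp only [shiftS, if_pos h1]; exact hmu _ h1 i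
        · simp [shiftS, h1]
      have m2 : ∀ i, 0 ≤ shiftS T nlo t i := by
        intro i; by_cases h1 : t + 1 < T
        · simp only [shiftS, if_pos h1]; exact hnlo _ h1 i
        · simp [shiftS, h1]
      have m3 : ∀ i, 0 ≤ shiftS T nhi t i := by
        intro i; by_cases h1 : t + 1 < T
        · simp only [shiftS, if_pos h1]; exact hnhi _ h1 i
        · simp [shiftS, h1]
      have c1 : ∀ i, 0 ≤ (h - F *ᵥ x t - G *ᵥ u t) i := by
        intro i
        have := hFle t ht' i
        simp only [Pi.add_apply] at this
        simp only [Pi.sub_apply]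
        linarith
      have c2 : ∀ i, 0 ≤ (V *ᵥ u t - shiftS T vlo t) i := by
        intro i
        have := (hVb t ht' i).1
        simp only [Pi.sub_apply]
        linarith
      have c3 : ∀ i, 0 ≤ (shiftHi T vhi t - V *ᵥ u t) i := by
        intro i
        have := (hVb t ht' i).2
        simp only [Pi.sub_apply]
        linarith
      exact add_nonneg (add_nonneg (dot_nonneg' c1 m1) (dot_nonneg' c2 m2))
        (dot_nonneg' c3 m3)
    rw [hsum, Finset.sum_add_distrib] at hS
    have htel : ∑ t ∈ Finset.range T,
        (x t ⬝ᵥ shiftT T lam t - x (t + 1) ⬝ᵥ shiftT T lam (t + 1))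
        = x 0 ⬝ᵥ lam 1 := by
      rw [Finset.sum_range_sub' (fun t => x t ⬝ᵥ shiftT T lam t) T]
      simp [shiftT, hT0]
    have hbnd : ∑ t ∈ Finset.range T,
        (h ⬝ᵥ shiftS T mu t + shiftHi T vhi t ⬝ᵥ shiftS T nhi t
          - shiftS T vlo t ⬝ᵥ shiftS T nlo t)
        = ∑ t ∈ Finset.range T, (h ⬝ᵥ mu t + vhi t ⬝ᵥ nhi t - vlo t ⬝ᵥ nlo t)
          - (h ⬝ᵥ mu 0 + vhi 0 ⬝ᵥ nhi 0 - vlo 0 ⬝ᵥ nlo 0) := by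
      obtain ⟨T', rfl⟩ : ∃ T', T = T' + 1 := ⟨T - 1, by omega⟩
      rw [Finset.sum_range_succ,
        Finset.sum_range_succ' (fun t => h ⬝ᵥ mu t + vhi t ⬝ᵥ nhi t - vlo t ⬝ᵥ nlo t) T']
      have hc : ∀ t ∈ Finset.range T',
          (h ⬝ᵥ shiftS (T' + 1) mu t + shiftHi (T' + 1) vhi t ⬝ᵥ shiftS (T' + 1) nhi t
            - shiftS (T' + 1) vlo t ⬝ᵥ shiftS (T' + 1) nlo t)
          = h ⬝ᵥ mu (t + 1) + vhi (t + 1) ⬝ᵥ nhi (t + 1) - vlo (t + 1) ⬝ᵥ nlo (t + 1) := by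
        intro t ht
        have h1 : t + 1 < T' + 1 := Nat.succ_lt_succ (Finset.mem_range.mp ht)
        simp [shiftS, shiftHi, h1]
      rw [Finset.sum_congr rfl hc]
      have h2 : ¬ (T' + 1 < T' + 1) := lt_irrefl _
      simp only [shiftS, shiftHi, if_neg h2]
      simp only [dotProduct_zero, zero_dotProduct]
      ring
    rw [htel, hbnd] at hS
    have ex0 : x 0 ⬝ᵥ lam 1
        = (A *ᵥ x0) ⬝ᵥ lam 1 + (B *ᵥ u0) ⬝ᵥ lam 1 + e0 ⬝ᵥ lam 1 := by
      rw [hx0]; simp [add_dotProduct]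
    rw [ex0] at hS
    rw [hd0] at he
    simp only [sub_dotProduct] at he
    linarith [hS, he, e10, e20]
  · intro hF0 hV0
    have p1 : 0 ≤ (h - F *ᵥ x0 - G *ᵥ u0) ⬝ᵥ mu 0 := by
      apply dot_nonneg' _ (fun i => hmu 0 hT0 i)
      intro i
      have := hF0 i
      simp only [Pi.add_apply] at this
      simp only [Pi.sub_apply]
      linarith
    have p2 : 0 ≤ (V *ᵥ u0 - vlo 0) ⬝ᵥ nlo 0 := by
      apply dot_nonneg' _ (fun i => hnlo 0 hT0 i)
      intro i
      have := (hV0 i).1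
      simp only [Pi.sub_apply]
      linarith
    have p3 : 0 ≤ (vhi 0 - V *ᵥ u0) ⬝ᵥ nhi 0 := by
      apply dot_nonneg' _ (fun i => hnhi 0 hT0 i)
      intro i
      have := (hV0 i).2
      simp only [Pi.sub_apply]
      linarith
    rw [zero_dotProduct]
    linarith [hpos]
end

section
/- Perfect-model decrease rate of the propagated dual bound: let ((λ_t, ρ_t)_{t=0}^T, (μ_t, ν̲_t, ν̄_t, σ_t)_{t=0}^{T−1}) be dual feasible with dual objective d₀ for data (x₀, (v̲_t), (v̄_t)), and let u₀ ∈ ℝ^p satisfy F x₀ + G u₀ ≤ h and v̲₀ ≤ V u₀ ≤ v̄₀ componentwise. Then the dual objective d₁ of the shifted multipliers for the data (A x₀ + B u₀, (v̲'_t), (v̄'_t)) satisfies d₁ ≥ d₀ − |Q x₀|² − |R u₀|². -/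
/-!
Evaluating the dual objective of the shifted multipliers, everything except the stage-0 terms
cancels. The stage-0 dual constraints, paired with `x₀` and `u₀`, rewrite `(A x₀ + B u₀)ᵀλ₁` as
`(Q x₀)ᵀρ₀ + x₀ᵀλ₀ + (F x₀ + G u₀)ᵀμ₀ + (R u₀)ᵀσ₀ + (V u₀)ᵀ(ν̄₀ − ν̲₀)`. Hence `d₁ − d₀` is a sum of
`|ρ₀/2|² − (Q x₀)ᵀρ₀ ≥ −|Q x₀|²`, the analogous term in `σ₀`, and products of nonnegative
multipliers with the slacks of `u₀` in the stage-0 constraints.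
-/

open Matrix

variable {n p q r c m : ℕ}

lemma dotProduct_le_sqNorm_half_add_sqNorm {k : ℕ} (a b : Fin k → ℝ) :
    a ⬝ᵥ b ≤ sqNorm (fun i => b i / 2) + sqNorm a := by
  simp only [sqNorm, dotProduct, ← Finset.sum_add_distrib]
  exact Finset.sum_le_sum fun i _ => by nlinarith [sq_nonneg (b i / 2 - a i)]

lemma Finset.sum_range_succ_eq_sum_sub_of_shift {β : Type*} [AddCommGroup β] {f g : ℕ → β}
    (S : ℕ) (hlast : g S = 0) (hshift : ∀ t < S, g t = f (t + 1)) :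
    ∑ t ∈ range (S + 1), g t = ∑ t ∈ range (S + 1), f t - f 0 := by
  rw [sum_range_succ, hlast, sum_range_succ', add_zero, add_sub_cancel_right]
  exact sum_congr rfl fun t ht => hshift t (mem_range.mp ht)

lemma dualObj_shift_sub_dualObj (T : ℕ) (hT : 1 ≤ T) (h : Fin c → ℝ) (x x' : Fin n → ℝ)
    (vlo vhi : ℕ → Fin m → ℝ) (lam : ℕ → Fin n → ℝ) (rho : ℕ → Fin q → ℝ)
    (mu : ℕ → Fin c → ℝ) (nlo nhi : ℕ → Fin m → ℝ) (sig : ℕ → Fin r → ℝ) :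
    dualObj T h x' (shiftS T vlo) (shiftHi T vhi) (shiftT T lam) (shiftT T rho)
        (shiftS T mu) (shiftS T nlo) (shiftS T nhi) (shiftS T sig)
      - dualObj T h x vlo vhi lam rho mu nlo nhi sig
      = sqNorm (fun i => rho 0 i / 2)
        + (sqNorm (fun i => sig 0 i / 2) + h ⬝ᵥ mu 0 + vhi 0 ⬝ᵥ nhi 0 - vlo 0 ⬝ᵥ nlo 0)
        + x ⬝ᵥ lam 0 - x' ⬝ᵥ lam 1 := by
  obtain ⟨S, rfl⟩ := Nat.exists_eq_add_of_le' hT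
  have hrho := Finset.sum_range_succ_eq_sum_sub_of_shift (S + 1)
    (f := fun t => sqNorm (fun i => rho t i / 2))
    (g := fun t => sqNorm (fun i => shiftT (S + 1) rho t i / 2))
    (by simp [shiftT, sqNorm]) (fun t ht => by simp [shiftT, ht])
  have hstage := Finset.sum_range_succ_eq_sum_sub_of_shift S
    (f := fun t => sqNorm (fun i => sig t i / 2) + h ⬝ᵥ mu t + vhi t ⬝ᵥ nhi t - vlo t ⬝ᵥ nlo t)
    (g := fun t => sqNorm (fun i => shiftS (S + 1) sig t i / 2) + h ⬝ᵥ shiftS (S + 1) mu t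
      + shiftHi (S + 1) vhi t ⬝ᵥ shiftS (S + 1) nhi t
      - shiftS (S + 1) vlo t ⬝ᵥ shiftS (S + 1) nlo t)
    (by simp [shiftS, shiftHi, sqNorm]) (fun t ht => by simp [shiftS, shiftHi, ht])
  have hlam : shiftT (S + 1) lam 0 = lam 1 := by simp [shiftT]
  simp only [dualObj, hrho, hstage, hlam]
  ring

lemma DualFeasible.dotProduct_succ {T : ℕ} {A : Matrix (Fin n) (Fin n) ℝ}
    {B : Matrix (Fin n) (Fin p) ℝ} {Q : Matrix (Fin q) (Fin n) ℝ} {R : Matrix (Fin r) (Fin p) ℝ}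
    {F : Matrix (Fin c) (Fin n) ℝ} {G : Matrix (Fin c) (Fin p) ℝ} {V : Matrix (Fin m) (Fin p) ℝ}
    {lam : ℕ → Fin n → ℝ} {rho : ℕ → Fin q → ℝ} {mu : ℕ → Fin c → ℝ}
    {nlo nhi : ℕ → Fin m → ℝ} {sig : ℕ → Fin r → ℝ}
    (hdual : DualFeasible T A B Q R F G V lam rho mu nlo nhi sig) {t : ℕ} (ht : t < T)
    (x : Fin n → ℝ) (u : Fin p → ℝ) :
    (A *ᵥ x + B *ᵥ u) ⬝ᵥ lam (t + 1)
      = (Q *ᵥ x) ⬝ᵥ rho t + x ⬝ᵥ lam t + (F *ᵥ x + G *ᵥ u) ⬝ᵥ mu t + (R *ᵥ u) ⬝ᵥ sig t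
        + (V *ᵥ u) ⬝ᵥ (nhi t - nlo t) := by
  obtain ⟨hstate, -, hinput, -⟩ := hdual
  have hx := congrArg (x ⬝ᵥ ·) (hstate t ht)
  have hu := congrArg (u ⬝ᵥ ·) (hinput t ht)
  simp only [dotProduct_add, dotProduct_sub, dotProduct_zero, dotProduct_transpose_mulVec] at hx hu
  simp only [dotProduct_comm _ (lam (t + 1)), dotProduct_comm _ (rho t), dotProduct_comm _ (mu t),
    dotProduct_comm _ (sig t), dotProduct_comm _ (nhi t - nlo t), dotProduct_add]
  linarith

/-- **Perfect-model decrease rate of the propagated dual bound:** for a dual-feasible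
tuple with dual objective `d₀` for `(x₀, (v̲_t), (v̄_t))` and a control `u₀` with
`F x₀ + G u₀ ≤ h` and `v̲₀ ≤ V u₀ ≤ v̄₀`, the dual objective `d₁` of the shifted
multipliers for the data `(A x₀ + B u₀, (v̲'_t), (v̄'_t))` satisfies
`d₁ ≥ d₀ − |Q x₀|² − |R u₀|²`. -/
theorem perfect_model_dual_bound_decrease (n p q r c m T : ℕ) (hT : 1 ≤ T)
    (A : Matrix (Fin n) (Fin n) ℝ) (B : Matrix (Fin n) (Fin p) ℝ)
    (Q : Matrix (Fin q) (Fin n) ℝ) (R : Matrix (Fin r) (Fin p) ℝ)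
    (F : Matrix (Fin c) (Fin n) ℝ) (G : Matrix (Fin c) (Fin p) ℝ)
    (V : Matrix (Fin m) (Fin p) ℝ) (h : Fin c → ℝ)
    (x0 : Fin n → ℝ) (u0 : Fin p → ℝ)
    (vlo vhi : ℕ → Fin m → ℝ)
    (lam : ℕ → Fin n → ℝ) (rho : ℕ → Fin q → ℝ)
    (mu : ℕ → Fin c → ℝ) (nlo nhi : ℕ → Fin m → ℝ) (sig : ℕ → Fin r → ℝ)
    (hdual : DualFeasible T A B Q R F G V lam rho mu nlo nhi sig)
    (hfeas : ∀ i, (F *ᵥ x0 + G *ᵥ u0) i ≤ h i)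
    (hbox : ∀ i, vlo 0 i ≤ (V *ᵥ u0) i ∧ (V *ᵥ u0) i ≤ vhi 0 i) :
    dualObj T h x0 vlo vhi lam rho mu nlo nhi sig
        - (sqNorm (Q *ᵥ x0) + sqNorm (R *ᵥ u0)) ≤
      dualObj T h (A *ᵥ x0 + B *ᵥ u0) (shiftS T vlo) (shiftHi T vhi)
        (shiftT T lam) (shiftT T rho) (shiftS T mu) (shiftS T nlo) (shiftS T nhi)
        (shiftS T sig) := by
  have hshift := dualObj_shift_sub_dualObj T hT h x0 (A *ᵥ x0 + B *ᵥ u0)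
    vlo vhi lam rho mu nlo nhi sig
  have hlam := hdual.dotProduct_succ hT x0 u0
  obtain ⟨-, -, -, hmu_nonneg, hnlo_nonneg, hnhi_nonneg⟩ := hdual
  have hQ := dotProduct_le_sqNorm_half_add_sqNorm (Q *ᵥ x0) (rho 0)
  have hR := dotProduct_le_sqNorm_half_add_sqNorm (R *ᵥ u0) (sig 0)
  have hmu : (F *ᵥ x0 + G *ᵥ u0) ⬝ᵥ mu 0 ≤ h ⬝ᵥ mu 0 :=
    dotProduct_le_dotProduct_of_nonneg_right hfeas (hmu_nonneg 0 hT)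
  have hnhi : (V *ᵥ u0) ⬝ᵥ nhi 0 ≤ vhi 0 ⬝ᵥ nhi 0 :=
    dotProduct_le_dotProduct_of_nonneg_right (fun i => (hbox i).2) (hnhi_nonneg 0 hT)
  have hnlo : vlo 0 ⬝ᵥ nlo 0 ≤ (V *ᵥ u0) ⬝ᵥ nlo 0 :=
    dotProduct_le_dotProduct_of_nonneg_right (fun i => (hbox i).1) (hnlo_nonneg 0 hT)
  rw [dotProduct_sub] at hlam
  linarith
end
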